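/- arXiv:1907.11718 — 2 statements merged into one kernel-verified Lean document; each statement's English description precedes it below -/
import Mathlib

section
/- For fixed (t,x) ∈ [0,T]×ℝ and fixed w,z ∈ ℝ, the difference V(t,x) - V^{cl}(t,x) between the exploratory optimal value function V(t,x) = (x-w)²e^{-ρᵀρ(T-t)} + (λd/4)ρᵀρ(T²-t²) - (λd/2)(ρᵀρT - (1/d)ln(|σᵀσ|/(πλ)))(T-t) - (w-z)² and the classical value function V^{cl}(t,x) = (x-w)²e^{-ρᵀρ(T-t)} - (w-z)² tends to 0 as λ → 0⁺. -/
open Matrix Real Filter Topology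

/-! After the classical terms cancel, the difference is `λ K + λ log (c / λ) K'` with
`c = |σᵀσ| / π` and constants `K, K'`; the second summand tends to `0` because `x log x` is
continuous at `0`. -/

/-- The junk value `log 0 = 0` makes `x * log (c / x)` vanish at `x = 0`, so it is
`x * log c - x * log x` everywhere when `c ≠ 0`, hence continuous. -/
theorem tendsto_mul_log_div_nhds_zero (c : ℝ) :
    Tendsto (fun x : ℝ => x * log (c / x)) (𝓝 0) (𝓝 0) := by
  rcases eq_or_ne c 0 with rfl | hc
  · simp
  have hsplit : (fun x : ℝ => x * log (c / x)) = fun x => x * log c - x * log x := by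
    funext x
    rcases eq_or_ne x 0 with rfl | hx
    · simp
    · rw [log_div hc hx]
      ring
  have hcont : Continuous fun x : ℝ => x * log c - x * log x := by fun_prop
  simpa [hsplit] using hcont.tendsto 0

theorem stmt6_general {d : ℕ} (T t x w z : ℝ)
    (ρ : Fin d → ℝ) (σ : Matrix (Fin d) (Fin d) ℝ) :
    Tendsto (fun lam : ℝ =>
        ((x - w)^2 * Real.exp (-(ρ ⬝ᵥ ρ) * (T - t))
          + (lam * (d : ℝ) / 4) * (ρ ⬝ᵥ ρ) * (T^2 - t^2)
          - (lam * (d : ℝ) / 2) *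
              ((ρ ⬝ᵥ ρ) * T - (1 / (d : ℝ)) * Real.log ((σᵀ * σ).det / (Real.pi * lam)))
              * (T - t)
          - (w - z)^2)
        - ((x - w)^2 * Real.exp (-(ρ ⬝ᵥ ρ) * (T - t)) - (w - z)^2))
      (nhdsWithin 0 (Set.Ioi 0)) (nhds 0) := by
  set K := (d / 4 * (ρ ⬝ᵥ ρ) * (T ^ 2 - t ^ 2) - d / 2 * (ρ ⬝ᵥ ρ) * T * (T - t) : ℝ)
  have hlog := tendsto_mul_log_div_nhds_zero ((σᵀ * σ).det / π)
  have hlim : Tendsto (fun lam : ℝ => lam * K + lam * log ((σᵀ * σ).det / π / lam)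
      * (d / 2 * (1 / d) * (T - t))) (𝓝 0) (𝓝 0) := by
    simpa using (tendsto_id.mul_const K).add (hlog.mul_const (d / 2 * (1 / d) * (T - t)))
  refine (hlim.congr fun lam => ?_).mono_left nhdsWithin_le_nhds
  rw [div_mul_eq_div_div]
  ring

/-- The difference between the exploratory optimal value function and the classical one
tends to `0` as the exploration weight `λ → 0⁺`. -/
theorem stmt6 {d : ℕ} (hd : 0 < d) (T t x w z : ℝ) (hT : 0 < T) (ht : t ∈ Set.Icc 0 T)
    (ρ : Fin d → ℝ) (σ : Matrix (Fin d) (Fin d) ℝ) (hσ : IsUnit σ.det) :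
    Tendsto (fun lam : ℝ =>
        ((x - w)^2 * Real.exp (-(ρ ⬝ᵥ ρ) * (T - t))
          + (lam * (d : ℝ) / 4) * (ρ ⬝ᵥ ρ) * (T^2 - t^2)
          - (lam * (d : ℝ) / 2) *
              ((ρ ⬝ᵥ ρ) * T - (1 / (d : ℝ)) * Real.log ((σᵀ * σ).det / (Real.pi * lam)))
              * (T - t)
          - (w - z)^2)
        - ((x - w)^2 * Real.exp (-(ρ ⬝ᵥ ρ) * (T - t)) - (w - z)^2))
      (nhdsWithin 0 (Set.Ioi 0)) (nhds 0) :=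
  stmt6_general T t x w z ρ σ
end

section
/- The function ω(t,x) = (x-w)² e^{-ρᵀρ(T-t)} - (w-z)² solves the HJB equation ω_t(t,x) + min_{u ∈ ℝ^d} (½ uᵀσᵀσu · ω_{xx}(t,x) + ρᵀσu · ω_x(t,x)) = 0 on [0,T)×ℝ with terminal condition ω(T,x) = (x-w)² - (w-z)², and the minimum in u is attained at u*(t,x) = -σ⁻¹ρ(x-w). -/
open Matrix Real

/-! With `E(t) = exp (-ρᵀρ (T - t))` one has `ω_x = 2E (x - w)`, `ω_xx = 2E` and
`ω_t = ρᵀρ (x - w)² E`. Since `ω_x = ω_xx (x - w)`, completing the square in `v = σu` shows that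
the Hamiltonian is minimised where `σu = -(x - w) ρ`, with minimum `-ρᵀρ (x - w)² E = -ω_t`. -/

section Hamiltonian

variable {ι : Type*} [Fintype ι]

/-- The inner expression of the HJB equation, with `p = ω_x` and `q = ω_xx`. -/
noncomputable def hamiltonian (σ : Matrix ι ι ℝ) (ρ : ι → ℝ) (p q : ℝ) (u : ι → ℝ) : ℝ :=
  (1/2) * (u ⬝ᵥ ((σᵀ * σ) *ᵥ u)) * q + (ρ ⬝ᵥ (σ *ᵥ u)) * p

lemma dotProduct_transpose_mul_self_mulVec {m : Type*} [Fintype m] {R : Type*} [CommSemiring R]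
    (A : Matrix m ι R) (u : ι → R) : u ⬝ᵥ ((Aᵀ * A) *ᵥ u) = (A *ᵥ u) ⬝ᵥ (A *ᵥ u) := by
  rw [← mulVec_mulVec, dotProduct_transpose_mulVec]

lemma hamiltonian_eq (σ : Matrix ι ι ℝ) (ρ : ι → ℝ) (p q : ℝ) (u : ι → ℝ) :
    hamiltonian σ ρ p q u = (1/2) * ((σ *ᵥ u) ⬝ᵥ (σ *ᵥ u)) * q + (ρ ⬝ᵥ (σ *ᵥ u)) * p := by
  rw [hamiltonian, dotProduct_transpose_mul_self_mulVec]

variable [DecidableEq ι] {σ : Matrix ι ι ℝ} (ρ : ι → ℝ)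

lemma hamiltonian_feedback (hσ : IsUnit σ.det) (q c : ℝ) :
    hamiltonian σ ρ (q * c) q ((-c) • (σ⁻¹ *ᵥ ρ)) = -(1/2) * q * c ^ 2 * (ρ ⬝ᵥ ρ) := by
  rw [hamiltonian_eq, mulVec_smul, mulVec_mulVec, mul_nonsing_inv σ hσ, one_mulVec]
  simp only [smul_dotProduct, dotProduct_smul, smul_eq_mul]
  ring

/-- Completing the square: `H(u) - H(u*) = ½ q |σu + cρ|²`. -/
lemma hamiltonian_feedback_le {q : ℝ} (hq : 0 ≤ q) (hσ : IsUnit σ.det) (c : ℝ) (u : ι → ℝ) :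
    hamiltonian σ ρ (q * c) q ((-c) • (σ⁻¹ *ᵥ ρ)) ≤ hamiltonian σ ρ (q * c) q u := by
  rw [hamiltonian_feedback ρ hσ, hamiltonian_eq]
  set v := σ *ᵥ u
  have hsq : 0 ≤ (v + c • ρ) ⬝ᵥ (v + c • ρ) := by
    simpa using dotProduct_star_self_nonneg (v + c • ρ)
  have hexpand :
      (v + c • ρ) ⬝ᵥ (v + c • ρ) = v ⬝ᵥ v + 2 * c * (ρ ⬝ᵥ v) + c ^ 2 * (ρ ⬝ᵥ ρ) := by
    simp only [add_dotProduct, dotProduct_add, smul_dotProduct, dotProduct_smul, smul_eq_mul,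
      dotProduct_comm v ρ]
    ring
  nlinarith [mul_nonneg hq hsq]

end Hamiltonian

lemma hasDerivAt_sub_sq_mul_sub (w c k x : ℝ) :
    HasDerivAt (fun y => (y - w) ^ 2 * c - k) (2 * c * (x - w)) x := by
  simpa [mul_comm, mul_assoc, mul_left_comm] using
    ((((hasDerivAt_id x).sub_const w).pow 2).mul_const c).sub_const k

lemma deriv_deriv_sub_sq_mul_sub (w c k x : ℝ) :
    deriv (fun y => deriv (fun y' => (y' - w) ^ 2 * c - k) y) x = 2 * c := by
  simp only [fun y => (hasDerivAt_sub_sq_mul_sub w c k y).deriv]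
  simp

lemma hasDerivAt_mul_exp_mul_sub_sub (b a T k t : ℝ) :
    HasDerivAt (fun s => b * exp (-a * (T - s)) - k) (a * b * exp (-a * (T - t))) t := by
  have hinner : HasDerivAt (fun s => -a * (T - s)) a t := by
    simpa using ((hasDerivAt_id t).const_sub T).const_mul (-a)
  simpa [mul_comm, mul_assoc, mul_left_comm] using (hinner.exp.const_mul b).sub_const k

theorem stmt7_general {d : ℕ} (T w z : ℝ)
    (ρ : Fin d → ℝ) (σ : Matrix (Fin d) (Fin d) ℝ) (hσ : IsUnit σ.det)
    (ω : ℝ → ℝ → ℝ)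
    (hω : ∀ t x : ℝ, ω t x = (x - w)^2 * Real.exp (-(ρ ⬝ᵥ ρ) * (T - t)) - (w - z)^2) :
    (∀ x : ℝ, ω T x = (x - w)^2 - (w - z)^2) ∧
    (∀ t ∈ Set.Ico (0:ℝ) T, ∀ x : ℝ,
      (∀ u : Fin d → ℝ,
        (1/2) * (((-(x - w)) • (σ⁻¹ *ᵥ ρ)) ⬝ᵥ ((σᵀ * σ) *ᵥ ((-(x - w)) • (σ⁻¹ *ᵥ ρ))))
            * deriv (fun y => deriv (fun y' => ω t y') y) x
          + (ρ ⬝ᵥ (σ *ᵥ ((-(x - w)) • (σ⁻¹ *ᵥ ρ)))) * deriv (fun y => ω t y) x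
        ≤ (1/2) * (u ⬝ᵥ ((σᵀ * σ) *ᵥ u)) * deriv (fun y => deriv (fun y' => ω t y') y) x
          + (ρ ⬝ᵥ (σ *ᵥ u)) * deriv (fun y => ω t y) x) ∧
      deriv (fun s => ω s x) t
        + ((1/2) * (((-(x - w)) • (σ⁻¹ *ᵥ ρ)) ⬝ᵥ ((σᵀ * σ) *ᵥ ((-(x - w)) • (σ⁻¹ *ᵥ ρ))))
            * deriv (fun y => deriv (fun y' => ω t y') y) x
          + (ρ ⬝ᵥ (σ *ᵥ ((-(x - w)) • (σ⁻¹ *ᵥ ρ)))) * deriv (fun y => ω t y) x) = 0) := by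
  simp only [hω]
  refine ⟨fun x => by simp, fun t _ x => ?_⟩
  set E := exp (-(ρ ⬝ᵥ ρ) * (T - t))
  have hωx : deriv (fun y => (y - w) ^ 2 * E - (w - z) ^ 2) x = 2 * E * (x - w) :=
    (hasDerivAt_sub_sq_mul_sub w E _ x).deriv
  have hωt : deriv (fun s => (x - w) ^ 2 * exp (-(ρ ⬝ᵥ ρ) * (T - s)) - (w - z) ^ 2) t
      = (ρ ⬝ᵥ ρ) * (x - w) ^ 2 * E :=
    (hasDerivAt_mul_exp_mul_sub_sub _ _ T _ t).deriv
  rw [deriv_deriv_sub_sq_mul_sub, hωx, hωt]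
  refine ⟨fun u => hamiltonian_feedback_le ρ (by positivity) hσ (x - w) u, ?_⟩
  change _ + hamiltonian σ ρ (2 * E * (x - w)) (2 * E) _ = 0
  rw [hamiltonian_feedback ρ hσ]
  ring

/-- `ω(t,x) = (x-w)² e^{-ρᵀρ(T-t)} - (w-z)²` solves the classical MV HJB equation,
with the inner minimum over `u ∈ ℝ^d` attained at `u*(t,x) = -σ⁻¹ρ(x-w)`. -/
theorem stmt7 {d : ℕ} (T w z : ℝ) (hT : 0 < T)
    (ρ : Fin d → ℝ) (σ : Matrix (Fin d) (Fin d) ℝ) (hσ : IsUnit σ.det)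
    (ω : ℝ → ℝ → ℝ)
    (hω : ∀ t x : ℝ, ω t x = (x - w)^2 * Real.exp (-(ρ ⬝ᵥ ρ) * (T - t)) - (w - z)^2) :
    (∀ x : ℝ, ω T x = (x - w)^2 - (w - z)^2) ∧
    (∀ t ∈ Set.Ico (0:ℝ) T, ∀ x : ℝ,
      (∀ u : Fin d → ℝ,
        (1/2) * (((-(x - w)) • (σ⁻¹ *ᵥ ρ)) ⬝ᵥ ((σᵀ * σ) *ᵥ ((-(x - w)) • (σ⁻¹ *ᵥ ρ))))
            * deriv (fun y => deriv (fun y' => ω t y') y) x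
          + (ρ ⬝ᵥ (σ *ᵥ ((-(x - w)) • (σ⁻¹ *ᵥ ρ)))) * deriv (fun y => ω t y) x
        ≤ (1/2) * (u ⬝ᵥ ((σᵀ * σ) *ᵥ u)) * deriv (fun y => deriv (fun y' => ω t y') y) x
          + (ρ ⬝ᵥ (σ *ᵥ u)) * deriv (fun y => ω t y) x) ∧
      deriv (fun s => ω s x) t
        + ((1/2) * (((-(x - w)) • (σ⁻¹ *ᵥ ρ)) ⬝ᵥ ((σᵀ * σ) *ᵥ ((-(x - w)) • (σ⁻¹ *ᵥ ρ))))
            * deriv (fun y => deriv (fun y' => ω t y') y) x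
          + (ρ ⬝ᵥ (σ *ᵥ ((-(x - w)) • (σ⁻¹ *ᵥ ρ)))) * deriv (fun y => ω t y) x) = 0) :=
  stmt7_general T w z ρ σ hσ ω hω
end
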